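/- Assume the Common Givens: P_i is a preference order on C consistent with Q; the query is the pair (c_j,c_k) with P_i(c_j,c_k); neither (c_j,c_k) nor (c_k,c_j) belongs to Q; and PW = {pw_1,…,pw_l} is a nonempty set of possible winners enumerated in decreasing order of P_i. Suppose that none of the following three positional conditions holds: (1) P_i(c_j,pw_1) and P_i(pw_l,c_k); (2) P_i(c_j,pw_1) and c_k ∈ [pw_1, P_i, pw_l]; (3) P_i(pw_l,c_k) and c_j ∈ [pw_1, P_i, pw_l] — equivalently, either both c_j,c_k ∈ [pw_1, P_i, pw_l], or both c_j,c_k are above pw_1 in P_i, or both c_j,c_k are below pw_l in P_i. Then no preference order P' ≠ P_i exists that both locally dominates P_i (given PW) and belongs to μ(P_i); in particular the voter cannot manipulate on this query. -/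

import Mathlib

/-!
Every inversion of a swap-minimal `P' ∈ μ(Pi)` lies inside the segment `[cj, Pi, ck]`: otherwise
keeping `P'` on the segment and `Pi` everywhere else is still feasible and strictly closer to `Pi`.
So Borda scores change only inside the segment, where its top `cj` can only lose and its bottom
`ck` can only gain. Local dominance needs two things on the possible winners: some Borda score
changes (otherwise both orders elect the same candidate in every possible world), and the gain
`borda P' - borda Pi` never increases going up `Pi` (otherwise a world with two contenders
`x` above `y` lets `Pi` elect `x` and `P'` elect `y`). The positional hypotheses say that `pw₁`
can only lose and `pwₗ` only gain, so the monotone gain vanishes on all of `PW`.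
-/

/-- A preference order: a strict total order on candidates. -/
def IsPref {C : Type*} (P : C → C → Prop) : Prop :=
  (∀ a b : C, a ≠ b → P a b ∨ P b a) ∧ (∀ a : C, ¬ P a a) ∧
    ∀ a b c : C, P a b → P b c → P a c

/-- The Borda score that preference order `P` gives candidate `c`. -/
noncomputable def borda {C : Type*} [Fintype C] (P : C → C → Prop) (c : C) : ℕ :=
  1 + Set.ncard {c' : C | P c c'}

/-- `c` is the outcome `F(s, P)`: it beats every other candidate either in total score
`s + borda`, or on equal total score by the tie-breaking order `tb`. -/
def IsWinner {C : Type*} [Fintype C] (tb : C → C → Prop) (s : C → ℕ)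
    (P : C → C → Prop) (c : C) : Prop :=
  ∀ c' : C, c' ≠ c →
    s c' + borda P c' < s c + borda P c ∨
      (s c' + borda P c' = s c + borda P c ∧ tb c c')

/-- `s` is a possible world for the set `PW` of possible winners. -/
def PossibleWorld {C : Type*} [Fintype C] (tb : C → C → Prop) (PW : Set C)
    (s : C → ℕ) : Prop :=
  ∀ R : C → C → Prop, IsPref R → ∀ c : C, IsWinner tb s R c → c ∈ PW

/-- `P'` locally dominates `P` given the possible-winner set `PW`. -/
def LocDom {C : Type*} [Fintype C] (tb : C → C → Prop) (PW : Set C)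
    (P' P : C → C → Prop) : Prop :=
  (∀ s : C → ℕ, PossibleWorld tb PW s →
      ∀ w' w : C, IsWinner tb s P' w' → IsWinner tb s P w → w' = w ∨ P w' w) ∧
  ∃ s : C → ℕ, PossibleWorld tb PW s ∧
      ∃ w' w : C, IsWinner tb s P' w' ∧ IsWinner tb s P w ∧ P w' w

/-- The (closed) segment `[c, P, c']` of candidates between `c` and `c'`. -/
def seg {C : Type*} (P : C → C → Prop) (c c' : C) : Set C :=
  {d : C | (d = c ∨ P c d) ∧ (d = c' ∨ P d c')}

/-- `Q` is a strict partial order (consistent, transitively closed reported preferences). -/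
def IsSPO {C : Type*} (Q : C → C → Prop) : Prop :=
  (∀ a : C, ¬ Q a a) ∧ ∀ a b c : C, Q a b → Q b c → Q a c

/-- `P` is consistent with (extends) the reported preferences `Q`, written `P ⊨ Q`. -/
def Extends {C : Type*} (P Q : C → C → Prop) : Prop := ∀ a b : C, Q a b → P a b

/-- The swap distance between two preference orders: the number of (unordered) pairs of
candidates ordered differently, counted here as ordered pairs `(a, b)` with
`P a b` and `P' b a`. -/
noncomputable def dswap {C : Type*} [Fintype C] (P P' : C → C → Prop) : ℕ :=
  Set.ncard {p : C × C | P p.1 p.2 ∧ P' p.2 p.1}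

/-- `P` is a preference order consistent with the transitive closure of `Q ∪ {(ck, cj)}`
(for a transitive total order this is the same as extending `Q` and putting `ck` above `cj`). -/
def Feasible {C : Type*} (Q : C → C → Prop) (cj ck : C) (P : C → C → Prop) : Prop :=
  IsPref P ∧ Extends P Q ∧ P ck cj

/-- `P ∈ μ(Pi)`: among all preference orders consistent with the transitive closure of
`Q ∪ {(ck, cj)}`, `P` minimizes the swap distance to `Pi`. -/
def InMu {C : Type*} [Fintype C] (Q : C → C → Prop) (cj ck : C)
    (Pi P : C → C → Prop) : Prop :=
  Feasible Q cj ck P ∧ ∀ R : C → C → Prop, Feasible Q cj ck R → dswap Pi P ≤ dswap Pi R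

namespace IsPref

variable {C : Type*} {P : C → C → Prop}

lemma irrefl (hP : IsPref P) (a : C) : ¬ P a a := hP.2.1 a

lemma trans (hP : IsPref P) {a b c : C} (hab : P a b) (hbc : P b c) : P a c :=
  hP.2.2 a b c hab hbc

lemma asymm (hP : IsPref P) {a b : C} (hab : P a b) : ¬ P b a :=
  fun hba => hP.irrefl a (hP.trans hab hba)

lemma rel_of_not_rel (hP : IsPref P) {a b : C} (hne : a ≠ b) (h : ¬ P a b) : P b a :=
  (hP.1 a b hne).resolve_left h

lemma mem_seg_or_rel_of_le (hP : IsPref P) {a b x : C} (hx : x = a ∨ P a x) :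
    x ∈ seg P a b ∨ P b x := by
  by_cases hxb : x = b ∨ P x b
  · exact Or.inl ⟨hx, hxb⟩
  · push Not at hxb
    exact Or.inr (hP.rel_of_not_rel hxb.1 hxb.2)

lemma mem_seg_or_rel_of_ge (hP : IsPref P) {a b x : C} (hx : x = b ∨ P x b) :
    x ∈ seg P a b ∨ P x a := by
  by_cases hax : x = a ∨ P a x
  · exact Or.inl ⟨hax, hx⟩
  · push Not at hax
    exact Or.inr (hP.rel_of_not_rel (Ne.symm hax.1) hax.2)

lemma forall_rel_or_forall_rel_of_notMem_seg (hP : IsPref P) {c c' a : C}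
    (ha : a ∉ seg P c c') : (∀ d ∈ seg P c c', P a d) ∨ (∀ d ∈ seg P c c', P d a) := by
  by_cases hca : a = c ∨ P c a
  · have hc'a : P c' a := by
      rcases hP.mem_seg_or_rel_of_le (b := c') hca with h | h
      · exact absurd h ha
      · exact h
    refine Or.inr fun d hd => ?_
    rcases hd.2 with rfl | hdc'
    exacts [hc'a, hP.trans hdc' hc'a]
  · push Not at hca
    have hac : P a c := hP.rel_of_not_rel (Ne.symm hca.1) hca.2
    refine Or.inl fun d hd => ?_
    rcases hd.1 with rfl | hcd
    exacts [hac, hP.trans hac hcd]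

end IsPref

section Splice

variable {C : Type*} {P P' Q : C → C → Prop} {S : Set C}

open Classical in
noncomputable def splice (S : Set C) (P' P : C → C → Prop) : C → C → Prop :=
  fun a b => if a ∈ S ∧ b ∈ S then P' a b else P a b

lemma splice_of_mem {a b : C} (ha : a ∈ S) (hb : b ∈ S) : splice S P' P a b = P' a b :=
  if_pos ⟨ha, hb⟩

lemma splice_of_notMem {a b : C} (h : ¬ (a ∈ S ∧ b ∈ S)) : splice S P' P a b = P a b :=
  if_neg h

lemma IsPref.splice (hP : IsPref P) (hP' : IsPref P')
    (hS : ∀ a ∉ S, (∀ d ∈ S, P a d) ∨ (∀ d ∈ S, P d a)) : IsPref (splice S P' P) := by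
  refine ⟨fun a b hne => ?_, fun a => ?_, fun a b c hab hbc => ?_⟩
  · by_cases h : a ∈ S ∧ b ∈ S
    · rw [splice_of_mem h.1 h.2, splice_of_mem h.2 h.1]; exact hP'.1 a b hne
    · rw [splice_of_notMem h, splice_of_notMem fun h' => h ⟨h'.2, h'.1⟩]; exact hP.1 a b hne
  · by_cases h : a ∈ S
    · rw [splice_of_mem h h]; exact hP'.irrefl a
    · rw [splice_of_notMem fun h' => h h'.1]; exact hP.irrefl a
  · by_cases hb : b ∈ S
    · by_cases ha : a ∈ S <;> by_cases hc : c ∈ S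
      · rw [splice_of_mem ha hb] at hab
        rw [splice_of_mem hb hc] at hbc
        rw [splice_of_mem ha hc]; exact hP'.trans hab hbc
      · rw [splice_of_notMem fun h => hc h.2] at hbc
        rw [splice_of_notMem fun h => hc h.2]
        rcases hS c hc with h | h
        exacts [absurd (h b hb) (hP.asymm hbc), h a ha]
      · rw [splice_of_notMem fun h => ha h.1] at hab
        rw [splice_of_notMem fun h => ha h.1]
        rcases hS a ha with h | h
        exacts [h c hc, absurd (h b hb) (hP.asymm hab)]
      · rw [splice_of_notMem fun h => ha h.1] at hab
        rw [splice_of_notMem fun h => hc h.2] at hbc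
        rw [splice_of_notMem fun h => ha h.1]; exact hP.trans hab hbc
    · rw [splice_of_notMem fun h => hb h.2] at hab
      rw [splice_of_notMem fun h => hb h.1] at hbc
      by_cases hac : a ∈ S ∧ c ∈ S
      · rcases hS b hb with h | h
        exacts [absurd (h a hac.1) (hP.asymm hab), absurd (h c hac.2) (hP.asymm hbc)]
      · rw [splice_of_notMem hac]; exact hP.trans hab hbc

lemma Extends.splice (hP : Extends P Q) (hP' : Extends P' Q) : Extends (splice S P' P) Q := by
  intro a b hab
  by_cases h : a ∈ S ∧ b ∈ S
  · rw [splice_of_mem h.1 h.2]; exact hP' a b hab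
  · rw [splice_of_notMem h]; exact hP a b hab

lemma dswap_splice_lt [Fintype C] (hP : IsPref P) {u v : C} (huv : P u v) (hvu : P' v u)
    (huvS : ¬ (u ∈ S ∧ v ∈ S)) : dswap P (splice S P' P) < dswap P P' := by
  refine Set.ncard_lt_ncard ((Set.ssubset_iff_of_subset ?_).mpr ⟨(u, v), ⟨huv, hvu⟩, ?_⟩)
    (Set.toFinite _)
  · rintro ⟨a, b⟩ ⟨hab, hba⟩
    refine ⟨hab, ?_⟩
    by_cases h : b ∈ S ∧ a ∈ S
    · rwa [splice_of_mem h.1 h.2] at hba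
    · rw [splice_of_notMem h] at hba; exact absurd hba (hP.asymm hab)
  · rintro ⟨-, hvu'⟩
    rw [splice_of_notMem fun h => huvS ⟨h.2, h.1⟩] at hvu'
    exact hP.asymm huv hvu'

end Splice

lemma InMu.mem_seg_of_inversion {C : Type*} [Fintype C] {Q Pi P' : C → C → Prop} {cj ck : C}
    (hPi : IsPref Pi) (hPiQ : Extends Pi Q) (hjk : Pi cj ck) (h : InMu Q cj ck Pi P')
    {u v : C} (huv : Pi u v) (hvu : P' v u) : u ∈ seg Pi cj ck ∧ v ∈ seg Pi cj ck := by
  obtain ⟨⟨hP', hP'Q, hkj⟩, hmin⟩ := h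
  by_contra huvS
  have hcj : cj ∈ seg Pi cj ck := ⟨Or.inl rfl, Or.inr hjk⟩
  have hck : ck ∈ seg Pi cj ck := ⟨Or.inr hjk, Or.inl rfl⟩
  have hfeas : Feasible Q cj ck (splice (seg Pi cj ck) P' Pi) :=
    ⟨hPi.splice hP' fun _ => hPi.forall_rel_or_forall_rel_of_notMem_seg, hPiQ.splice hP'Q,
      (splice_of_mem hck hcj).symm ▸ hkj⟩
  exact absurd (hmin _ hfeas) (not_le.mpr (dswap_splice_lt hPi huv hvu huvS))

section Borda

variable {C : Type*} [Fintype C] {P P' : C → C → Prop}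

lemma one_le_borda (P : C → C → Prop) (c : C) : 1 ≤ borda P c :=
  Nat.le_add_right 1 _

lemma borda_le_card (hP : ∀ a, ¬ P a a) (c : C) : borda P c ≤ Fintype.card C := by
  have hlt : {c' : C | P c c'}.ncard < Fintype.card C := by
    rw [← Nat.card_eq_fintype_card, ← Set.ncard_univ]
    exact Set.ncard_lt_ncard
      (Set.ssubset_univ_iff.mpr ((Set.ne_univ_iff_exists_notMem _).mpr ⟨c, hP c⟩))
  unfold borda
  omega

lemma borda_le_borda {c : C} (h : ∀ d, P c d → P' c d) : borda P c ≤ borda P' c :=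
  Nat.add_le_add_left (Set.ncard_le_ncard h (Set.toFinite _)) 1

variable {S : Set C} (hP : IsPref P) (hP' : IsPref P')
  (hinv : ∀ u v, P u v → P' v u → u ∈ S ∧ v ∈ S)
include hP hP' hinv

lemma borda_eq_of_notMem {c : C} (hc : c ∉ S) : borda P' c = borda P c := by
  refine le_antisymm (borda_le_borda fun d hcd => ?_) (borda_le_borda fun d hcd => ?_)
  · by_contra h
    exact hc (hinv d c (hP.rel_of_not_rel (fun hdc => hP'.irrefl c (hdc ▸ hcd)) h) hcd).2
  · by_contra h
    exact hc (hinv c d hcd (hP'.rel_of_not_rel (fun hdc => hP.irrefl c (hdc ▸ hcd)) h)).1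

lemma borda_le_of_forall_mem_below {c : C} (hc : ∀ d ∈ S, d = c ∨ P c d) :
    borda P' c ≤ borda P c := by
  refine borda_le_borda fun d hcd => ?_
  by_contra h
  have hdc : P d c := hP.rel_of_not_rel (fun hdc => hP'.irrefl c (hdc ▸ hcd)) h
  rcases hc d (hinv d c hdc hcd).1 with rfl | hcd'
  exacts [hP.irrefl d hdc, hP.asymm hdc hcd']

lemma le_borda_of_forall_mem_above {c : C} (hc : ∀ d ∈ S, d = c ∨ P d c) :
    borda P c ≤ borda P' c := by
  refine borda_le_borda fun d hcd => ?_
  by_contra h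
  have hdc : P' d c := hP'.rel_of_not_rel (fun hdc => hP.irrefl c (hdc ▸ hcd)) h
  rcases hc d (hinv c d hcd hdc).2 with rfl | hdc'
  exacts [hP.irrefl d hcd, hP.asymm hcd hdc']

end Borda

section LocalDominance

variable {C : Type*} [Fintype C] {tb P P' : C → C → Prop} {PW : Set C}

lemma IsWinner.eq_of_borda_eq (htb : IsPref tb) {s : C → ℕ} {w w' : C}
    (hw : IsWinner tb s P w) (hw' : IsWinner tb s P' w')
    (hb : borda P' w = borda P w) (hb' : borda P' w' = borda P w') : w' = w := by
  by_contra hne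
  rcases hw w' hne with h | ⟨h, htw⟩ <;> rcases hw' w (Ne.symm hne) with h' | ⟨h', htw'⟩
  · omega
  · omega
  · omega
  · exact htb.asymm htw htw'

/-- Only `x` and `y` get a head start, each by the other's `P`-score plus `card C`: they are the
only contenders, `P` ties them up to the tie-break point and `hgain` tips `P'` towards `y`. -/
lemma exists_possibleWorld_isWinner (htb : IsPref tb) (hP : IsPref P) (hP' : IsPref P')
    {x y : C} (hx : x ∈ PW) (hy : y ∈ PW) (hxy : x ≠ y)
    (hgain : borda P' x + borda P y < borda P x + borda P' y) :
    ∃ s, PossibleWorld tb PW s ∧ IsWinner tb s P x ∧ IsWinner tb s P' y := by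
  classical
  set n := Fintype.card C
  -- the extra point makes `x` win against `y` under `P` when the tie-break favours `y`
  set g : ℕ := if tb x y then 0 else 1
  have hg : (g = 0 ∧ tb x y) ∨ (g = 1 ∧ tb y x) := by
    by_cases h : tb x y
    · exact Or.inl ⟨if_pos h, h⟩
    · exact Or.inr ⟨if_neg h, htb.rel_of_not_rel hxy h⟩
  set s : C → ℕ := fun c =>
    if c = x then borda P y + n + g else if c = y then borda P x + n else 0
  have hsx : s x = borda P y + n + g := if_pos rfl
  have hsy : s y = borda P x + n := by simp only [s, if_neg hxy.symm, if_true]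
  have hlow : ∀ R : C → C → Prop, IsPref R → ∀ c, c ≠ x → c ≠ y →
      s c + borda R c ≤ n := by
    intro R hR c hcx hcy
    simp only [s, if_neg hcx, if_neg hcy, zero_add]
    exact borda_le_card hR.irrefl c
  have := one_le_borda P x
  have := one_le_borda P y
  refine ⟨s, fun R hR c hc => ?_, fun c hcx => ?_, fun c hcy => ?_⟩
  · by_contra hcPW
    have hcx : c ≠ x := fun h => hcPW (h ▸ hx)
    have := hlow R hR c hcx fun h => hcPW (h ▸ hy)
    rcases hc x hcx.symm with h | ⟨h, -⟩ <;> omega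
  · by_cases hcy : c = y
    · rw [hcy, hsx, hsy]
      rcases hg with ⟨hg, htxy⟩ | ⟨hg, -⟩
      · exact Or.inr ⟨by omega, htxy⟩
      · exact Or.inl (by omega)
    · have := hlow P hP c hcx hcy
      exact Or.inl (by omega)
  · by_cases hcx : c = x
    · rw [hcx, hsx, hsy]
      rcases hg with ⟨hg, -⟩ | ⟨hg, htyx⟩
      · exact Or.inl (by omega)
      · rcases Nat.lt_or_ge (borda P y + n + g + borda P' x) (borda P x + n + borda P' y)
          with h | h
        · exact Or.inl h
        · exact Or.inr ⟨by omega, htyx⟩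
    · have := hlow P' hP' c hcx hcy
      have := one_le_borda P' y
      exact Or.inl (by omega)

lemma LocDom.exists_borda_ne (htb : IsPref tb) (hP : IsPref P) (hP' : IsPref P')
    (h : LocDom tb PW P' P) : ∃ w ∈ PW, borda P' w ≠ borda P w := by
  by_contra! hb
  obtain ⟨s, hs, w', w, hw', hw, hw'w⟩ := h.2
  have hww' := hw.eq_of_borda_eq htb hw' (hb w (hs P hP w hw)) (hb w' (hs P' hP' w' hw'))
  exact hP.irrefl w (hww' ▸ hw'w)

/-- The Borda gain `borda P' - borda P` is antitone along `P` on `PW`, stated without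
subtraction in `ℕ`. -/
lemma LocDom.borda_add_le (htb : IsPref tb) (hP : IsPref P) (hP' : IsPref P')
    (h : LocDom tb PW P' P) {x y : C} (hx : x ∈ PW) (hy : y ∈ PW) (hxy : x = y ∨ P x y) :
    borda P x + borda P' y ≤ borda P' x + borda P y := by
  rcases hxy with rfl | hxy
  · omega
  by_contra! hgain
  obtain ⟨s, hs, hwx, hwy⟩ := exists_possibleWorld_isWinner htb hP hP' hx hy
    (fun h => hP.irrefl x (h ▸ hxy)) (by omega)
  rcases h.1 s hs y x hwy hwx with rfl | hyx
  exacts [hP.irrefl y hxy, hP.asymm hxy hyx]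

end LocalDominance

section Position

variable {C : Type*} {P : C → C → Prop} {cj ck top bot : C}

lemma IsPref.notMem_seg_or_eq_left (hP : IsPref P) (h1 : ¬ (P cj top ∧ P bot ck))
    (h2 : ¬ (P cj top ∧ ck ∈ seg P top bot)) : top ∉ seg P cj ck ∨ top = cj := by
  by_contra! h
  obtain ⟨⟨htj, htk⟩, hne⟩ := h
  have hjt : P cj top := htj.resolve_left hne
  rcases hP.mem_seg_or_rel_of_le (b := bot) (htk.imp Eq.symm id) with h | h
  exacts [h2 ⟨hjt, h⟩, h1 ⟨hjt, h⟩]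

lemma IsPref.notMem_seg_or_eq_right (hP : IsPref P) (h1 : ¬ (P cj top ∧ P bot ck))
    (h3 : ¬ (P bot ck ∧ cj ∈ seg P top bot)) : bot ∉ seg P cj ck ∨ bot = ck := by
  by_contra! h
  obtain ⟨⟨hbj, hbk⟩, hne⟩ := h
  have hbk' : P bot ck := hbk.resolve_left hne
  rcases hP.mem_seg_or_rel_of_ge (a := top) (hbj.imp Eq.symm id) with h | h
  exacts [h3 ⟨hbk', h⟩, h1 ⟨h, hbk'⟩]

lemma mem_seg_of_rel_iff_lt {l : ℕ} (hl : 0 < l) {pw : Fin l → C}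
    (horder : ∀ a b : Fin l, P (pw a) (pw b) ↔ a < b) (i : Fin l) :
    pw i ∈ seg P (pw ⟨0, hl⟩) (pw ⟨l - 1, Nat.sub_lt hl Nat.one_pos⟩) := by
  have h0 : (⟨0, hl⟩ : Fin l) ≤ i := Nat.zero_le _
  have h1 : i ≤ ⟨l - 1, Nat.sub_lt hl Nat.one_pos⟩ := Nat.le_sub_one_of_lt i.isLt
  exact ⟨(eq_or_lt_of_le h0).imp (fun h => congrArg pw h.symm) (horder _ _).mpr,
    (eq_or_lt_of_le h1).imp (congrArg pw) (horder _ _).mpr⟩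

end Position

theorem statement14 {C : Type*} [Fintype C]
    (tb : C → C → Prop) (htb : IsPref tb)
    (Q : C → C → Prop)
    (Pi : C → C → Prop) (hPi : IsPref Pi) (hPiQ : Extends Pi Q)
    (cj ck : C) (hjk : Pi cj ck)
    (l : ℕ) (hl : 0 < l) (pw : Fin l → C)
    (horder : ∀ a b : Fin l, Pi (pw a) (pw b) ↔ a < b)
    (hnot1 : ¬ (Pi cj (pw ⟨0, hl⟩) ∧ Pi (pw ⟨l - 1, by omega⟩) ck))
    (hnot2 : ¬ (Pi cj (pw ⟨0, hl⟩) ∧ ck ∈ seg Pi (pw ⟨0, hl⟩) (pw ⟨l - 1, by omega⟩)))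
    (hnot3 : ¬ (Pi (pw ⟨l - 1, by omega⟩) ck ∧ cj ∈ seg Pi (pw ⟨0, hl⟩) (pw ⟨l - 1, by omega⟩))) :
    ¬ ∃ P' : C → C → Prop, P' ≠ Pi ∧
        LocDom tb (Set.range pw) P' Pi ∧ InMu Q cj ck Pi P' := by
  rintro ⟨P', -, hdom, hmu⟩
  have hP' : IsPref P' := hmu.1.1
  have hinv : ∀ u v, Pi u v → P' v u → u ∈ seg Pi cj ck ∧ v ∈ seg Pi cj ck :=
    fun _ _ => hmu.mem_seg_of_inversion hPi hPiQ hjk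
  have hPW := mem_seg_of_rel_iff_lt hl horder
  have htop : borda P' (pw ⟨0, hl⟩) ≤ borda Pi (pw ⟨0, hl⟩) := by
    rcases hPi.notMem_seg_or_eq_left hnot1 hnot2 with h | h
    · exact (borda_eq_of_notMem hPi hP' hinv h).le
    · rw [h]; exact borda_le_of_forall_mem_below hPi hP' hinv fun d hd => hd.1
  have hbot : borda Pi (pw ⟨l - 1, by omega⟩) ≤ borda P' (pw ⟨l - 1, by omega⟩) := by
    rcases hPi.notMem_seg_or_eq_right hnot1 hnot3 with h | h
    · exact (borda_eq_of_notMem hPi hP' hinv h).ge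
    · rw [h]; exact le_borda_of_forall_mem_above hPi hP' hinv fun d hd => hd.2
  obtain ⟨_, ⟨i, rfl⟩, hne⟩ := hdom.exists_borda_ne htb hPi hP'
  have h1 := hdom.borda_add_le htb hPi hP' ⟨_, rfl⟩ ⟨i, rfl⟩ ((hPW i).1.imp Eq.symm id)
  have h2 := hdom.borda_add_le htb hPi hP' ⟨i, rfl⟩ ⟨_, rfl⟩ (hPW i).2
  omega
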